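/- Let m ≥ 2, λ a primitive m-th root of unity, and let c_i be positive reals indexed by a finite set satisfying the balancing condition (1/m)∑_i i^k c_i = ∑_{i ≡ u mod m} i^k c_i for all residues u and all 0 ≤ k ≤ K. Then for every u ∈ {1,…,m−1}, the polynomial Q(η) = ∑_i c_i λ^{u i} η^i satisfies Q(1) = Q'(1) = ⋯ = Q^{(K)}(1) = 0. -/

import Mathlib

/-!
Write `w = λ^u`, so `w ≠ 1` and `w^m = 1`, and `w^i` depends only on `i mod m`. By the balancing
condition every residue class carries the same moment `∑ i^k c_i`, so the `k`-th moment
`∑ c_i w^i i^k` equals that common moment times `∑_{r<m} w^r = 0`. The `j`-th derivative of `Q`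
at `1` is `∑ c_i w^i i(i-1)⋯(i-j+1)`, a combination of the moments of order `≤ j`.
-/

open Polynomial Finset

theorem sum_pow_mul_eq_zero_of_fiber_sums_eq {K : Type*} [Field K] {m : ℕ} (hm : 0 < m)
    {w : K} (hwm : w ^ m = 1) (hw1 : w ≠ 1) (s : Finset ℕ) (a : ℕ → K) (A : K)
    (hA : ∀ r < m, ∑ i ∈ s with i % m = r, a i = A) :
    ∑ i ∈ s, w ^ i * a i = 0 := by
  have hfiber : ∀ r ∈ range m, ∑ i ∈ s with i % m = r, w ^ i * a i = w ^ r * A := by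
    intro r hr
    rw [← hA r (mem_range.1 hr), mul_sum]
    refine sum_congr rfl fun i hi => ?_
    rw [pow_eq_pow_mod i hwm, (mem_filter.1 hi).2]
  rw [← sum_fiberwise_of_maps_to (g := (· % m)) fun i _ => mem_range.2 (Nat.mod_lt i hm),
    sum_congr rfl hfiber, ← sum_mul, geom_sum_eq hw1, hwm, sub_self, zero_div, zero_mul]

theorem sum_mul_eval_eq_zero_of_sum_mul_pow_eq_zero {ι R : Type*} [CommSemiring R]
    (s : Finset ι) (b x : ι → R) {K : ℕ} (h : ∀ k ≤ K, ∑ i ∈ s, b i * x i ^ k = 0)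
    {p : R[X]} (hp : p.natDegree ≤ K) :
    ∑ i ∈ s, b i * p.eval (x i) = 0 := by
  simp_rw [eval_eq_sum_range' (Nat.lt_succ_of_le hp), mul_sum, mul_left_comm (b _)]
  rw [sum_comm]
  refine sum_eq_zero fun k hk => ?_
  rw [← mul_sum, h k (Nat.lt_succ_iff.1 (mem_range.1 hk)), mul_zero]

theorem eval_one_iterate_derivative_sum_C_mul_X_pow {R : Type*} [CommRing R] (s : Finset ℕ)
    (b : ℕ → R) (j : ℕ) :
    (derivative^[j] (∑ i ∈ s, C (b i) * X ^ i)).eval 1 =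
      ∑ i ∈ s, b i * (descPochhammer R j).eval (i : R) := by
  simp [iterate_derivative_sum, eval_finsetSum, iterate_derivative_C_mul,
    iterate_derivative_X_pow_eq_C_mul, descPochhammer_eval_eq_descFactorial]

theorem stmt14_general (m : ℕ) (ζ : ℂ) (hroot : ζ ^ m = 1)
    (hprim : ∀ k : ℕ, 1 ≤ k → k < m → ζ ^ k ≠ 1)
    (c : ℕ →₀ ℝ) (K : ℕ)
    (hbal : ∀ k ≤ K, ∀ u : ℕ,
      (1 / (m : ℝ)) * ∑ i ∈ c.support, (i : ℝ) ^ k * c i =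
        ∑ i ∈ c.support.filter (fun i => i % m = u % m), (i : ℝ) ^ k * c i) :
    ∀ u : ℕ, 1 ≤ u → u ≤ m - 1 → ∀ j ≤ K,
      (Polynomial.derivative^[j]
        (∑ i ∈ c.support,
          Polynomial.C ((c i : ℂ) * ζ ^ (u * i)) * Polynomial.X ^ i)).eval 1 = 0 := by
  intro u hu1 hu2 j hj
  have hwm : (ζ ^ u) ^ m = 1 := by rw [← pow_mul, mul_comm, pow_mul, hroot, one_pow]
  have hw1 : ζ ^ u ≠ 1 := hprim u hu1 (by omega)
  have hmoments : ∀ k ≤ K, ∑ i ∈ c.support, (c i : ℂ) * ζ ^ (u * i) * (i : ℂ) ^ k = 0 := by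
    intro k hk
    have := sum_pow_mul_eq_zero_of_fiber_sums_eq (by omega) hwm hw1 c.support
      (fun i => (((i : ℝ) ^ k * c i : ℝ) : ℂ)) _ fun r hr => by
        rw [← Complex.ofReal_sum, ← Nat.mod_eq_of_lt hr, ← hbal k hk r]
    simpa [pow_mul, mul_assoc, mul_comm, mul_left_comm] using this
  rw [eval_one_iterate_derivative_sum_C_mul_X_pow]
  exact sum_mul_eval_eq_zero_of_sum_mul_pow_eq_zero _ _ _ hmoments
    (by rw [descPochhammer_natDegree]; exact hj)

theorem stmt14 (m : ℕ) (hm : 2 ≤ m) (ζ : ℂ) (hroot : ζ ^ m = 1)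
    (hprim : ∀ k : ℕ, 1 ≤ k → k < m → ζ ^ k ≠ 1)
    (c : ℕ →₀ ℝ) (hpos : ∀ i ∈ c.support, 0 < c i) (K : ℕ)
    (hbal : ∀ k ≤ K, ∀ u : ℕ,
      (1 / (m : ℝ)) * ∑ i ∈ c.support, (i : ℝ) ^ k * c i =
        ∑ i ∈ c.support.filter (fun i => i % m = u % m), (i : ℝ) ^ k * c i) :
    ∀ u : ℕ, 1 ≤ u → u ≤ m - 1 → ∀ j ≤ K,
      (Polynomial.derivative^[j]
        (∑ i ∈ c.support,
          Polynomial.C ((c i : ℂ) * ζ ^ (u * i)) * Polynomial.X ^ i)).eval 1 = 0 :=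
  stmt14_general m ζ hroot hprim c K hbal
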